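/- arXiv:2406.05403 — 2 statements merged into one kernel-verified Lean document; each statement's English description precedes it below -/
import Mathlib

section
/- In the PlatSynth(k) buffer-chain system, any operation sequence of length at most k−1 does not violate the non-interference property with secret input buf_0 and observable output buf_k; that is, for any two initial states agreeing on buf_1, ..., buf_k (but possibly differing on buf_0), the final values of buf_k are equal after executing the sequence. -/
/-- The operation `op i` of the PlatSynth(k) buffer-chain platform: it copies
buffer `i` into buffer `i+1`, leaving all other buffers unchanged. -/
def platSynthOp {k : ℕ} {D : Type*} (i : Fin k) (σ : Fin (k + 1) → D) :
    Fin (k + 1) → D :=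
  Function.update σ i.succ (σ i.castSucc)

lemma platSynth_aux {k : ℕ} {D : Type*} :
    ∀ (ops : List (Fin k)) (σ1 σ2 : Fin (k + 1) → D) (t : ℕ),
      (∀ j : Fin (k + 1), t < (j : ℕ) → σ1 j = σ2 j) →
      ∀ j : Fin (k + 1), t + ops.length < (j : ℕ) →
        (ops.foldl (fun σ i => platSynthOp i σ) σ1) j
          = (ops.foldl (fun σ i => platSynthOp i σ) σ2) j := by
  intro ops
  induction ops with
  | nil => intro σ1 σ2 t h j hj; exact h j (by simpa using hj)
  | cons i rest ih =>
    intro σ1 σ2 t h j hj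
    simp only [List.foldl_cons]
    refine ih _ _ (t + 1) ?_ j (by simpa [Nat.add_comm, Nat.add_assoc, Nat.add_left_comm] using hj)
    intro j' hj'
    unfold platSynthOp
    by_cases hje : j' = i.succ
    · subst hje
      simp only [Function.update_self]
      apply h
      have h1 : (i.succ : ℕ) = (i : ℕ) + 1 := rfl
      have h2 : (i.castSucc : ℕ) = (i : ℕ) := rfl
      omega
    · rw [Function.update_of_ne hje, Function.update_of_ne hje]
      exact h j' (by omega)

/-- Any operation sequence of length at most `k - 1` does not violate
non-interference with secret input `buf_0` and observable output `buf_k`: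
for any two initial states agreeing on all buffers except `buf_0`, the final
values of `buf_k` coincide. -/
theorem platSynth_short_sequences_secure {k : ℕ} (hk : 1 ≤ k) {D : Type*}
    (ops : List (Fin k)) (hlen : ops.length ≤ k - 1)
    (σ1 σ2 : Fin (k + 1) → D)
    (hpub : ∀ j : Fin (k + 1), j ≠ 0 → σ1 j = σ2 j) :
    (ops.foldl (fun σ i => platSynthOp i σ) σ1) (Fin.last k)
      = (ops.foldl (fun σ i => platSynthOp i σ) σ2) (Fin.last k) := by
  apply platSynth_aux ops σ1 σ2 0
  · intro j hj
    apply hpub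
    intro h0
    rw [h0] at hj
    simp at hj
  · simpa using by omega
end

section
/- In the computation-reuse platform, the sequence multiply–load–multiply violates non-interference with secret memory and observable mulcount: there exist two initial states with empty reuse buffers, agreeing on registers and mulcount but differing in memory, such that after executing a multiply (priming the buffer), a load of a secret memory value into an operand register, and a second multiply using that operand, the final mulcount values differ. -/
/-- State of the computation-reuse platform. -/
structure CRState (Addr Val : Type*) where
  regs : Fin 4 → Val
  mem : Addr → Val
  buf : Val × Val → Option Val
  mulcount : ℕ

variable {Addr Val : Type*}

/-- Multiply: buffer hit reuses the result without incrementing `mulcount`;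
miss increments `mulcount` and inserts the entry `((a, b), a * b)`. -/
def crMul [Mul Val] [DecidableEq (Val × Val)]
    (rd rs1 rs2 : Fin 4) (σ : CRState Addr Val) : CRState Addr Val :=
  let a := σ.regs rs1
  let b := σ.regs rs2
  match σ.buf (a, b) with
  | some r => { σ with regs := Function.update σ.regs rd r }
  | none =>
    { σ with
      regs := Function.update σ.regs rd (a * b),
      buf := Function.update σ.buf (a, b) (some (a * b)),
      mulcount := σ.mulcount + 1 }

/-- Load: copies a memory value into a register. -/
def crLoad (rd : Fin 4) (a : Addr) (σ : CRState Addr Val) :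
    CRState Addr Val :=
  { σ with regs := Function.update σ.regs rd (σ.mem a) }

/-- The multiply–load–multiply sequence violates non-interference with secret
memory and observable `mulcount`: there exist instruction operands and two
initial states with empty reuse buffers, agreeing on registers and `mulcount`
but differing in memory, such that after a multiply (priming the buffer), a
load of a secret memory value into an operand register, and a second multiply
using that operand, the final `mulcount` values differ. -/
theorem crMulLoadMul_violates [Mul Val] [DecidableEq (Val × Val)]
    [Inhabited Addr] (hD : ∃ a b : Val, a ≠ b) :
    ∃ (rd1 rs1 rs2 : Fin 4) (rdl : Fin 4) (addr : Addr)
      (rd2 rs1' rs2' : Fin 4) (σ1 σ2 : CRState Addr Val),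
      σ1.regs = σ2.regs ∧
      σ1.mulcount = σ2.mulcount ∧
      σ1.buf = (fun _ => none) ∧ σ2.buf = (fun _ => none) ∧
      σ1.mem ≠ σ2.mem ∧
      (crMul rd2 rs1' rs2'
          (crLoad rdl addr (crMul rd1 rs1 rs2 σ1))).mulcount
        ≠ (crMul rd2 rs1' rs2'
            (crLoad rdl addr (crMul rd1 rs1 rs2 σ2))).mulcount := by
  obtain ⟨a, b, hab⟩ := hD
  refine ⟨0, 1, 1, 1, default, 0, 1, 1,
    ⟨fun _ => a, fun _ => a, fun _ => none, 0⟩,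
    ⟨fun _ => a, fun _ => b, fun _ => none, 0⟩,
    rfl, rfl, rfl, rfl, ?_, ?_⟩
  · intro h
    exact hab (congrFun h default)
  · simp only [crMul, crLoad, Function.update]
    simp [hab, Prod.ext_iff, Ne.symm hab]
end
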